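/- arXiv:2106.15996 — 3 statements merged into one kernel-verified Lean document; each statement's English description precedes it below -/
import Mathlib

section
/- For every integer k ≥ 0 there exist real symmetric (2k+1)×(2k+1) matrices C₁, …, C_{2k+1} and monomials ζ^{μ₂}, …, ζ^{μ_{2k+1}} that are multiaffine of degree k in the variables ζ₁,…,ζ_{2k+1}, such that the matrix pencil C(ζ) = ζ₁C₁ + ⋯ + ζ_{2k+1}C_{2k+1} applied to the column vector (ζ₂ζ₄⋯ζ_{2k}, ζ^{μ₂}, …, ζ^{μ_{2k+1}})ᵀ yields the column vector (ζ₁ζ₃⋯ζ_{2k+1}, 0, …, 0)ᵀ identically in ζ. -/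
open Finset

def mu (k j v : ℕ) : ℕ :=
  if j ≤ k then
    if (v % 2 = 0 ∧ 1 ≤ v ∧ v ≤ 2 * j) ∨ (v % 2 = 1 ∧ 2 * j + 1 ≤ v) then 1 else 0
  else
    if v = 0 ∨ (v % 2 = 1 ∧ v + 3 + 2 * k ≤ 2 * j) ∨ (v % 2 = 0 ∧ 2 * j + 2 ≤ v + 2 * k) then 1
    else 0

noncomputable def cc (k v a b : ℕ) : ℝ :=
  (if (a = k + 1 + b ∧ b + 1 ≤ k) ∧ v = 2 * b + 2 then 2⁻¹ else 0) +
  (if (a = k + b ∧ 1 ≤ b) ∧ v = 2 * b - 1 then -2⁻¹ else 0) +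
  (if (a = k ∧ b = 0) ∧ v = 0 then 2⁻¹ else 0)

noncomputable def Cmat (k : ℕ) (v : Fin (2 * k + 1)) : Matrix (Fin (2 * k + 1)) (Fin (2 * k + 1)) ℝ :=
  Matrix.of fun a b => cc k v.val a.val b.val + cc k v.val b.val a.val

def zf (k : ℕ) (ζ : Fin (2 * k + 1) → ℂ) (c : ℕ) : ℂ :=
  if h : c < 2 * k + 1 then ζ ⟨c, h⟩ else 0

def Xf (k : ℕ) (ζ : Fin (2 * k + 1) → ℂ) (m : ℕ) : ℂ :=
  ∏ v : Fin (2 * k + 1), ζ v ^ mu k m v.val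

lemma sum_pairs (n : ℕ) (g : ℕ → ℕ) :
    ∑ m ∈ Finset.range (2 * n + 1), g m
      = g 0 + ∑ p ∈ Finset.range n, (g (2 * p + 1) + g (2 * p + 2)) := by
  induction n with
  | zero => simp
  | succ n ih =>
    rw [show 2 * (n + 1) + 1 = (2 * n + 1 + 1) + 1 by omega]
    rw [Finset.sum_range_succ, Finset.sum_range_succ, ih, Finset.sum_range_succ]
    rw [show 2 * n + 1 + 1 = 2 * n + 2 by omega]
    ring

lemma zsum (k : ℕ) (ζ : Fin (2 * k + 1) → ℂ) (P : Prop) [Decidable P] (c : ℕ) (r : ℂ) :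
    ∑ v : Fin (2 * k + 1), ζ v * (if P ∧ v.val = c then r else 0)
      = if P then zf k ζ c * r else 0 := by
  by_cases hP : P
  · simp only [hP, true_and, if_true]
    by_cases hc : c < 2 * k + 1
    · rw [zf, dif_pos hc]
      rw [show (∑ v : Fin (2 * k + 1), ζ v * (if v.val = c then r else 0))
            = ∑ v : Fin (2 * k + 1), (if v = ⟨c, hc⟩ then ζ v * r else 0) from
          Finset.sum_congr rfl fun v _ => by
            by_cases h : v = ⟨c, hc⟩
            · subst h; simp
            · rw [if_neg h, if_neg fun hv => h (Fin.ext hv), mul_zero]]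
      rw [Finset.sum_ite_eq' Finset.univ (⟨c, hc⟩ : Fin (2 * k + 1)) (fun v => ζ v * r)]
      simp
    · rw [zf, dif_neg hc, zero_mul]
      apply Finset.sum_eq_zero
      intro v _
      rw [if_neg, mul_zero]
      exact fun hv => hc (hv ▸ v.isLt)
  · simp [hP]

lemma lsum (k : ℕ) (P : Prop) [Decidable P] (c : ℕ) (hc : P → c < 2 * k + 1) (g : ℕ → ℂ) :
    ∑ l : Fin (2 * k + 1), (if P ∧ l.val = c then g l.val else 0)
      = if P then g c else 0 := by
  by_cases hP : P
  · simp only [hP, true_and, if_true]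
    have hc' := hc hP
    rw [show (∑ l : Fin (2 * k + 1), (if l.val = c then g l.val else 0))
          = ∑ l : Fin (2 * k + 1), (if l = ⟨c, hc'⟩ then g l.val else 0) from
        Finset.sum_congr rfl fun l _ => by
          by_cases h : l = ⟨c, hc'⟩
          · subst h; simp
          · rw [if_neg fun hv => h (Fin.ext hv), if_neg h]]
    rw [Finset.sum_ite_eq' Finset.univ (⟨c, hc'⟩ : Fin (2 * k + 1)) (fun l => g l.val)]
    simp
  · simp [hP]

lemma wsum (k : ℕ) (ζ : Fin (2 * k + 1) → ℂ) (a b : ℕ) :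
    ∑ v : Fin (2 * k + 1), ζ v * ((cc k v.val a b : ℝ) : ℂ)
      = (if a = k + 1 + b ∧ b + 1 ≤ k then zf k ζ (2 * b + 2) * 2⁻¹ else 0)
      + (if a = k + b ∧ 1 ≤ b then zf k ζ (2 * b - 1) * (-2⁻¹) else 0)
      + (if a = k ∧ b = 0 then zf k ζ 0 * 2⁻¹ else 0) := by
  have h : ∀ v : Fin (2 * k + 1), ζ v * ((cc k v.val a b : ℝ) : ℂ)
      = ζ v * (if (a = k + 1 + b ∧ b + 1 ≤ k) ∧ v.val = 2 * b + 2 then (2⁻¹ : ℂ) else 0)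
      + ζ v * (if (a = k + b ∧ 1 ≤ b) ∧ v.val = 2 * b - 1 then (-2⁻¹ : ℂ) else 0)
      + ζ v * (if (a = k ∧ b = 0) ∧ v.val = 0 then (2⁻¹ : ℂ) else 0) := by
    intro v
    rw [cc]
    simp only [apply_ite (fun r : ℝ => (r : ℂ)), Complex.ofReal_add, Complex.ofReal_inv,
      Complex.ofReal_neg, Complex.ofReal_zero, Complex.ofReal_ofNat]
    ring
  rw [Finset.sum_congr rfl fun v _ => h v, Finset.sum_add_distrib, Finset.sum_add_distrib,
    zsum k ζ _ _ _, zsum k ζ _ _ _, zsum k ζ _ _ _]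

lemma M0 (k : ℕ) (ζ : Fin (2 * k + 1) → ℂ) (c a : ℕ) (hc : c < 2 * k + 1) :
    zf k ζ c * Xf k ζ a
      = ∏ v : Fin (2 * k + 1), ζ v ^ ((if v.val = c then 1 else 0) + mu k a v.val) := by
  have h1 : zf k ζ c = ∏ v : Fin (2 * k + 1), ζ v ^ (if v.val = c then 1 else 0) := by
    rw [zf, dif_pos hc]
    rw [show (∏ v : Fin (2 * k + 1), ζ v ^ (if v.val = c then 1 else 0))
          = ∏ v : Fin (2 * k + 1), (if v = ⟨c, hc⟩ then ζ v else 1) from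
        Finset.prod_congr rfl fun v _ => by
          by_cases h : v = ⟨c, hc⟩
          · subst h; simp
          · rw [if_neg h, if_neg fun hv => h (Fin.ext hv), pow_zero]]
    rw [Finset.prod_ite_eq' Finset.univ (⟨c, hc⟩ : Fin (2 * k + 1)) (fun v => ζ v)]
    simp
  rw [h1, Xf, ← Finset.prod_mul_distrib]
  exact Finset.prod_congr rfl fun v _ => (pow_add _ _ _).symm

lemma M1 (k : ℕ) (ζ : Fin (2 * k + 1) → ℂ) (c a d b : ℕ) (hc : c < 2 * k + 1)
    (hd : d < 2 * k + 1)
    (h : ∀ m, m < 2 * k + 1 →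
      (if m = c then 1 else 0) + mu k a m = (if m = d then 1 else 0) + mu k b m) :
    zf k ζ c * Xf k ζ a = zf k ζ d * Xf k ζ b := by
  rw [M0 k ζ c a hc, M0 k ζ d b hd]
  exact Finset.prod_congr rfl fun v _ => by rw [h v.val v.isLt]

lemma M2 (k : ℕ) (ζ : Fin (2 * k + 1) → ℂ) (c a : ℕ) (hc : c < 2 * k + 1)
    (h : ∀ m, m < 2 * k + 1 →
      (if m = c then 1 else 0) + mu k a m = (if m % 2 = 0 then 1 else 0)) :
    zf k ζ c * Xf k ζ a
      = ∏ v ∈ Finset.univ.filter (fun v : Fin (2 * k + 1) => v.val % 2 = 0), ζ v := by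
  rw [M0 k ζ c a hc, Finset.prod_filter]
  refine Finset.prod_congr rfl fun v _ => ?_
  rw [h v.val v.isLt]
  split_ifs <;> simp

lemma E0a (k : ℕ) (hk : 1 ≤ k) : ∀ m, m < 2 * k + 1 →
    (if m = 2 then 1 else 0) + mu k (k + 1) m = (if m % 2 = 0 then 1 else 0) := by
  intro m hm; simp only [mu]; split_ifs <;> (try simp only [false_or, or_false, true_and, and_true, false_and, and_false, true_or, or_true] at *) <;> first | omega | tauto

lemma E0b (k : ℕ) (hk : 1 ≤ k) : ∀ m, m < 2 * k + 1 →
    (if m = 0 then 1 else 0) + mu k k m = (if m % 2 = 0 then 1 else 0) := by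
  intro m hm; simp only [mu]; split_ifs <;> (try simp only [false_or, or_false, true_and, and_true, false_and, and_false, true_or, or_true] at *) <;> first | omega | tauto

lemma Emid (k j : ℕ) (h1 : 1 ≤ j) (h2 : j + 1 ≤ k) : ∀ m, m < 2 * k + 1 →
    (if m = 2 * j + 2 then 1 else 0) + mu k (k + 1 + j) m
      = (if m = 2 * j - 1 then 1 else 0) + mu k (k + j) m := by
  intro m hm; simp only [mu]; split_ifs <;> (try simp only [false_or, or_false, true_and, and_true, false_and, and_false, true_or, or_true] at *) <;> first | omega | tauto

lemma Ek (k : ℕ) (hk : 1 ≤ k) : ∀ m, m < 2 * k + 1 →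
    (if m = 0 then 1 else 0) + mu k 0 m
      = (if m = 2 * k - 1 then 1 else 0) + mu k (2 * k) m := by
  intro m hm; simp only [mu]; split_ifs <;> (try simp only [false_or, or_false, true_and, and_true, false_and, and_false, true_or, or_true] at *) <;> first | omega | tauto

lemma Erel (k p : ℕ) (hp : p + 1 ≤ k) : ∀ m, m < 2 * k + 1 →
    (if m = 2 * p + 2 then 1 else 0) + mu k p m
      = (if m = 2 * p + 1 then 1 else 0) + mu k (p + 1) m := by
  intro m hm; simp only [mu]; split_ifs <;> (try simp only [false_or, or_false, true_and, and_true, false_and, and_false, true_or, or_true] at *) <;> first | omega | tauto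

lemma deg (k : ℕ) (j : Fin (2 * k + 1)) : ∑ v : Fin (2 * k + 1), mu k j.val v.val = k := by
  have hj := j.isLt
  rw [Fin.sum_univ_eq_sum_range (fun m => mu k j.val m) (2 * k + 1),
    sum_pairs k (fun m => mu k j.val m)]
  by_cases hjk : j.val ≤ k
  · have h0 : mu k j.val 0 = 0 := by
      simp only [mu, if_pos hjk]; split_ifs <;> (try simp only [false_or, or_false, true_and, and_true, false_and, and_false, true_or, or_true] at *) <;> first | omega | tauto
    have hpair : ∀ p ∈ Finset.range k,
        mu k j.val (2 * p + 1) + mu k j.val (2 * p + 2) = 1 := by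
      intro p hp
      simp only [mu, if_pos hjk]
      split_ifs <;> (try simp only [false_or, or_false, true_and, and_true, false_and, and_false, true_or, or_true] at *) <;> first | omega | tauto
    rw [h0, Finset.sum_congr rfl hpair, Finset.sum_const, Finset.card_range, smul_eq_mul,
      mul_one, zero_add]
  · have h0 : mu k j.val 0 = 1 := by
      simp only [mu, if_neg hjk]; split_ifs <;> (try simp only [false_or, or_false, true_and, and_true, false_and, and_false, true_or, or_true] at *) <;> first | omega | tauto
    have hpair : ∀ p ∈ Finset.range k,
        mu k j.val (2 * p + 1) + mu k j.val (2 * p + 2)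
          = if p = j.val - k - 1 then 0 else 1 := by
      intro p hp
      simp only [Finset.mem_range] at hp
      simp only [mu, if_neg hjk]
      split_ifs <;> (try simp only [false_or, or_false, true_and, and_true, false_and, and_false, true_or, or_true] at *) <;> first | omega | tauto
    rw [h0, Finset.sum_congr rfl hpair]
    have h2 : ∑ p ∈ Finset.range k,
        ((if p = j.val - k - 1 then (0 : ℕ) else 1) + (if p = j.val - k - 1 then 1 else 0))
          = k := by
      rw [Finset.sum_congr rfl
        (fun p _ => by split_ifs <;> (try simp only [false_or, or_false, true_and, and_true, false_and, and_false, true_or, or_true] at *) <;> first | omega | tauto :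
          ∀ p ∈ Finset.range k,
            ((if p = j.val - k - 1 then (0 : ℕ) else 1)
              + (if p = j.val - k - 1 then 1 else 0)) = 1)]
      simp
    rw [Finset.sum_add_distrib,
      Finset.sum_ite_eq' (Finset.range k) (j.val - k - 1) (fun _ => (1 : ℕ)),
      if_pos (by simp only [Finset.mem_range]; omega)] at h2
    omega

lemma master (k : ℕ) (ζ : Fin (2 * k + 1) → ℂ) (j : Fin (2 * k + 1)) :
    Matrix.mulVec (∑ v, ζ v • (Cmat k v).map (fun a => (a : ℂ)))
        (fun l => Xf k ζ l.val) j
      = (if k + 1 ≤ j.val then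
            zf k ζ (2 * (j.val - k - 1) + 2) * 2⁻¹ * Xf k ζ (j.val - k - 1) else 0)
      + (if k + 1 ≤ j.val then
            zf k ζ (2 * (j.val - k) - 1) * (-2⁻¹) * Xf k ζ (j.val - k) else 0)
      + (if j.val = k then zf k ζ 0 * 2⁻¹ * Xf k ζ 0 else 0)
      + (if j.val + 1 ≤ k then
            zf k ζ (2 * j.val + 2) * 2⁻¹ * Xf k ζ (k + 1 + j.val) else 0)
      + (if 1 ≤ j.val ∧ j.val ≤ k then
            zf k ζ (2 * j.val - 1) * (-2⁻¹) * Xf k ζ (k + j.val) else 0)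
      + (if j.val = 0 then zf k ζ 0 * 2⁻¹ * Xf k ζ k else 0) := by
  have hj := j.isLt
  have step1 : ∀ l : Fin (2 * k + 1),
      (∑ v : Fin (2 * k + 1),
          ζ v * ((cc k v.val j.val l.val + cc k v.val l.val j.val : ℝ) : ℂ)) * Xf k ζ l.val
      = (((if (k + 1 ≤ j.val) ∧ l.val = j.val - k - 1 then
              zf k ζ (2 * l.val + 2) * 2⁻¹ * Xf k ζ l.val else 0)
        + (if (k + 1 ≤ j.val) ∧ l.val = j.val - k then
              zf k ζ (2 * l.val - 1) * (-2⁻¹) * Xf k ζ l.val else 0)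
        + (if (j.val = k) ∧ l.val = 0 then zf k ζ 0 * 2⁻¹ * Xf k ζ l.val else 0))
        + ((if (j.val + 1 ≤ k) ∧ l.val = k + 1 + j.val then
              zf k ζ (2 * j.val + 2) * 2⁻¹ * Xf k ζ l.val else 0)
        + (if (1 ≤ j.val ∧ j.val ≤ k) ∧ l.val = k + j.val then
              zf k ζ (2 * j.val - 1) * (-2⁻¹) * Xf k ζ l.val else 0)
        + (if (j.val = 0) ∧ l.val = k then zf k ζ 0 * 2⁻¹ * Xf k ζ l.val else 0))) := by
    intro l
    have hl := l.isLt
    rw [show (∑ v : Fin (2 * k + 1),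
          ζ v * ((cc k v.val j.val l.val + cc k v.val l.val j.val : ℝ) : ℂ))
        = (∑ v : Fin (2 * k + 1), ζ v * ((cc k v.val j.val l.val : ℝ) : ℂ))
        + (∑ v : Fin (2 * k + 1), ζ v * ((cc k v.val l.val j.val : ℝ) : ℂ)) from by
      rw [← Finset.sum_add_distrib]
      exact Finset.sum_congr rfl fun v _ => by push_cast; ring]
    rw [wsum k ζ j.val l.val, wsum k ζ l.val j.val, add_mul]
    simp only [add_mul, ite_mul, zero_mul]
    have i1 : (if j.val = k + 1 + l.val ∧ l.val + 1 ≤ k then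
          zf k ζ (2 * l.val + 2) * 2⁻¹ * Xf k ζ l.val else 0)
        = (if (k + 1 ≤ j.val) ∧ l.val = j.val - k - 1 then
          zf k ζ (2 * l.val + 2) * 2⁻¹ * Xf k ζ l.val else 0) := if_congr (by omega) rfl rfl
    have i2 : (if j.val = k + l.val ∧ 1 ≤ l.val then
          zf k ζ (2 * l.val - 1) * (-2⁻¹) * Xf k ζ l.val else 0)
        = (if (k + 1 ≤ j.val) ∧ l.val = j.val - k then
          zf k ζ (2 * l.val - 1) * (-2⁻¹) * Xf k ζ l.val else 0) := if_congr (by omega) rfl rfl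
    have i3 : (if j.val = k ∧ l.val = 0 then
          zf k ζ 0 * 2⁻¹ * Xf k ζ l.val else 0)
        = (if (j.val = k) ∧ l.val = 0 then
          zf k ζ 0 * 2⁻¹ * Xf k ζ l.val else 0) := if_congr (by omega) rfl rfl
    have i4 : (if l.val = k + 1 + j.val ∧ j.val + 1 ≤ k then
          zf k ζ (2 * j.val + 2) * 2⁻¹ * Xf k ζ l.val else 0)
        = (if (j.val + 1 ≤ k) ∧ l.val = k + 1 + j.val then
          zf k ζ (2 * j.val + 2) * 2⁻¹ * Xf k ζ l.val else 0) := if_congr (by omega) rfl rfl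
    have i5 : (if l.val = k + j.val ∧ 1 ≤ j.val then
          zf k ζ (2 * j.val - 1) * (-2⁻¹) * Xf k ζ l.val else 0)
        = (if (1 ≤ j.val ∧ j.val ≤ k) ∧ l.val = k + j.val then
          zf k ζ (2 * j.val - 1) * (-2⁻¹) * Xf k ζ l.val else 0) := if_congr (by omega) rfl rfl
    have i6 : (if l.val = k ∧ j.val = 0 then
          zf k ζ 0 * 2⁻¹ * Xf k ζ l.val else 0)
        = (if (j.val = 0) ∧ l.val = k then
          zf k ζ 0 * 2⁻¹ * Xf k ζ l.val else 0) := if_congr (by omega) rfl rfl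
    rw [i1, i2, i3, i4, i5, i6]
  calc Matrix.mulVec (∑ v, ζ v • (Cmat k v).map (fun a => (a : ℂ)))
        (fun l => Xf k ζ l.val) j
      = ∑ l : Fin (2 * k + 1),
          (∑ v : Fin (2 * k + 1),
            ζ v * ((cc k v.val j.val l.val + cc k v.val l.val j.val : ℝ) : ℂ)) * Xf k ζ l.val := by
        simp only [Matrix.mulVec, dotProduct, Matrix.sum_apply, Matrix.smul_apply,
          Matrix.map_apply, Matrix.of_apply, Cmat, smul_eq_mul]
    _ = _ := by
        rw [Finset.sum_congr rfl fun l _ => step1 l]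
        rw [Finset.sum_add_distrib, Finset.sum_add_distrib, Finset.sum_add_distrib,
          Finset.sum_add_distrib, Finset.sum_add_distrib]
        have e1 : (∑ l : Fin (2 * k + 1), if (k + 1 ≤ j.val) ∧ l.val = j.val - k - 1 then
              zf k ζ (2 * l.val + 2) * 2⁻¹ * Xf k ζ l.val else 0)
            = if k + 1 ≤ j.val then
              zf k ζ (2 * (j.val - k - 1) + 2) * 2⁻¹ * Xf k ζ (j.val - k - 1) else 0 :=
          lsum k _ _ (fun _ => by omega) (fun m => zf k ζ (2 * m + 2) * 2⁻¹ * Xf k ζ m)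
        have e2 : (∑ l : Fin (2 * k + 1), if (k + 1 ≤ j.val) ∧ l.val = j.val - k then
              zf k ζ (2 * l.val - 1) * (-2⁻¹) * Xf k ζ l.val else 0)
            = if k + 1 ≤ j.val then
              zf k ζ (2 * (j.val - k) - 1) * (-2⁻¹) * Xf k ζ (j.val - k) else 0 :=
          lsum k _ _ (fun _ => by omega) (fun m => zf k ζ (2 * m - 1) * (-2⁻¹) * Xf k ζ m)
        have e3 : (∑ l : Fin (2 * k + 1), if (j.val = k) ∧ l.val = 0 then
              zf k ζ 0 * 2⁻¹ * Xf k ζ l.val else 0)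
            = if j.val = k then zf k ζ 0 * 2⁻¹ * Xf k ζ 0 else 0 :=
          lsum k _ _ (fun _ => by omega) (fun m => zf k ζ 0 * 2⁻¹ * Xf k ζ m)
        have e4 : (∑ l : Fin (2 * k + 1), if (j.val + 1 ≤ k) ∧ l.val = k + 1 + j.val then
              zf k ζ (2 * j.val + 2) * 2⁻¹ * Xf k ζ l.val else 0)
            = if j.val + 1 ≤ k then
              zf k ζ (2 * j.val + 2) * 2⁻¹ * Xf k ζ (k + 1 + j.val) else 0 :=
          lsum k _ _ (fun _ => by omega) (fun m => zf k ζ (2 * j.val + 2) * 2⁻¹ * Xf k ζ m)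
        have e5 : (∑ l : Fin (2 * k + 1), if (1 ≤ j.val ∧ j.val ≤ k) ∧ l.val = k + j.val then
              zf k ζ (2 * j.val - 1) * (-2⁻¹) * Xf k ζ l.val else 0)
            = if 1 ≤ j.val ∧ j.val ≤ k then
              zf k ζ (2 * j.val - 1) * (-2⁻¹) * Xf k ζ (k + j.val) else 0 :=
          lsum k _ _ (fun h => by omega) (fun m => zf k ζ (2 * j.val - 1) * (-2⁻¹) * Xf k ζ m)
        have e6 : (∑ l : Fin (2 * k + 1), if (j.val = 0) ∧ l.val = k then
              zf k ζ 0 * 2⁻¹ * Xf k ζ l.val else 0)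
            = if j.val = 0 then zf k ζ 0 * 2⁻¹ * Xf k ζ k else 0 :=
          lsum k _ _ (fun _ => by omega) (fun m => zf k ζ 0 * 2⁻¹ * Xf k ζ m)
        rw [e1, e2, e3, e4, e5, e6]
        ring

lemma fin_zero_iff (n : ℕ) [NeZero n] (j : Fin n) : j = 0 ↔ j.val = 0 := by
  rw [Fin.ext_iff]; simp

lemma rows (k : ℕ) (hk : 1 ≤ k) (ζ : Fin (2 * k + 1) → ℂ) (j : Fin (2 * k + 1)) :
    Matrix.mulVec (∑ v, ζ v • (Cmat k v).map (fun a => (a : ℂ)))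
        (fun l => Xf k ζ l.val) j
      = if j = 0 then
          ∏ v ∈ Finset.univ.filter (fun v : Fin (2 * k + 1) => v.val % 2 = 0), ζ v
        else 0 := by
  have hj := j.isLt
  rw [master k ζ j]
  simp only [fin_zero_iff]
  obtain h0 | hmid | hkk | hbig :
      j.val = 0 ∨ (1 ≤ j.val ∧ j.val + 1 ≤ k) ∨ j.val = k ∨ k + 1 ≤ j.val := by omega
  · simp only [if_neg (show ¬(k + 1 ≤ j.val) by omega),
      if_neg (show ¬(j.val = k) by omega),
      if_pos (show j.val + 1 ≤ k by omega),
      if_neg (show ¬(1 ≤ j.val ∧ j.val ≤ k) by omega),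
      if_pos h0]
    rw [h0]
    norm_num
    have A := M2 k ζ 2 (k + 1) (by omega) (E0a k hk)
    have B := M2 k ζ 0 k (by omega) (E0b k hk)
    linear_combination (2⁻¹ : ℂ) * A + (2⁻¹ : ℂ) * B
  · simp only [if_neg (show ¬(k + 1 ≤ j.val) by omega),
      if_neg (show ¬(j.val = k) by omega),
      if_pos (show j.val + 1 ≤ k by omega),
      if_pos (show 1 ≤ j.val ∧ j.val ≤ k by omega),
      if_neg (show ¬(j.val = 0) by omega)]
    have A := M1 k ζ (2 * j.val + 2) (k + 1 + j.val) (2 * j.val - 1) (k + j.val)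
      (by omega) (by omega) (Emid k j.val hmid.1 hmid.2)
    norm_num
    linear_combination (2⁻¹ : ℂ) * A
  · simp only [if_neg (show ¬(k + 1 ≤ j.val) by omega),
      if_pos hkk,
      if_neg (show ¬(j.val + 1 ≤ k) by omega),
      if_pos (show 1 ≤ j.val ∧ j.val ≤ k by omega),
      if_neg (show ¬(j.val = 0) by omega)]
    rw [hkk, show k + k = 2 * k from (two_mul k).symm]
    have A := M1 k ζ 0 0 (2 * k - 1) (2 * k) (by omega) (by omega) (Ek k hk)
    norm_num
    linear_combination (2⁻¹ : ℂ) * A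
  · simp only [if_pos hbig,
      if_neg (show ¬(j.val = k) by omega),
      if_neg (show ¬(j.val + 1 ≤ k) by omega),
      if_neg (show ¬(1 ≤ j.val ∧ j.val ≤ k) by omega),
      if_neg (show ¬(j.val = 0) by omega)]
    set p := j.val - k - 1 with hp
    rw [show j.val - k = p + 1 by omega, show 2 * (p + 1) - 1 = 2 * p + 1 by omega]
    have A := M1 k ζ (2 * p + 2) p (2 * p + 1) (p + 1) (by omega) (by omega)
      (Erel k p (by omega))
    norm_num
    linear_combination (2⁻¹ : ℂ) * A

theorem product_polarization_lemma (k : ℕ) :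
    ∃ C : Fin (2 * k + 1) → Matrix (Fin (2 * k + 1)) (Fin (2 * k + 1)) ℝ,
      (∀ v, (C v).IsSymm) ∧
      ∃ μ : Fin (2 * k + 1) → Fin (2 * k + 1) → ℕ,
        (μ 0 = fun v => if v.val % 2 = 1 then 1 else 0) ∧
        (∀ j v, μ j v ≤ 1) ∧
        (∀ j, ∑ v, μ j v = k) ∧
        ∀ ζ : Fin (2 * k + 1) → ℂ,
          (Matrix.mulVec (∑ v, ζ v • (C v).map (fun a => (a : ℂ)))
              (fun j => ∏ v, ζ v ^ μ j v)) =
            fun j => if j = 0 then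
              ∏ v ∈ Finset.univ.filter (fun v : Fin (2 * k + 1) => v.val % 2 = 0), ζ v
            else 0 := by
  rcases Nat.eq_zero_or_pos k with hk | hk
  · subst hk
    refine ⟨fun _ => Matrix.of fun _ _ => (1 : ℝ), fun v => Matrix.ext fun i j => rfl,
      fun _ _ => 0, ?_, fun j v => Nat.zero_le 1, fun j => by simp, ?_⟩
    · funext v
      have hv : v.val = 0 := by have := v.isLt; omega
      simp [hv]
    · intro ζ
      funext j
      have hj0 : j = 0 := by
        have h1 : j.val = 0 := by have := j.isLt; omega
        exact (fin_zero_iff _ j).mpr h1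
      subst hj0
      rw [if_pos rfl]
      have e : ∀ g : Fin (2 * 0 + 1) → ℂ, (∑ v, g v) = g 0 := fun g => Fin.sum_univ_one g
      have e' : ∀ g : Fin (2 * 0 + 1) → ℂ, (∏ v, g v) = g 0 := fun g => Fin.prod_univ_one g
      simp only [Matrix.mulVec, dotProduct, Matrix.sum_apply, Matrix.smul_apply,
        Matrix.map_apply, Matrix.of_apply, smul_eq_mul, pow_zero, Complex.ofReal_one,
        mul_one, Finset.prod_const_one]
      rw [e (fun l => ∑ v : Fin (2 * 0 + 1), ζ v), e (fun v => ζ v)]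
      rw [Finset.prod_filter, e' (fun v : Fin (2 * 0 + 1) => if v.val % 2 = 0 then ζ v else 1)]
      norm_num
  · refine ⟨Cmat k, ?_, fun j v => mu k j.val v.val, ?_, ?_, ?_, ?_⟩
    · intro v
      exact Matrix.ext fun a b => add_comm _ _
    · funext v
      have h0 : ((0 : Fin (2 * k + 1)) : ℕ) = 0 := rfl
      simp only [mu, h0, if_pos (Nat.zero_le k)]
      split_ifs <;> omega
    · intro j v
      simp only [mu]
      split_ifs <;> omega
    · intro j
      exact deg k j
    · intro ζ
      funext j
      exact rows k hk ζ j
end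

section
/- Let q, p be polynomials with real coefficients in d variables with max{deg q, deg p} = n and max{deg_{z_k} q, deg_{z_k} p} = n_k for each k. Let Ψ(z) be the row vector of all monomials z^α with deg z^α ≤ n and deg_{z_k} z^α ≤ n_k for all k. Then there exist real symmetric matrices A₀, A₁, …, A_d such that q(ζ)p(z) = Ψ(ζ)(A₀ + z₁A₁ + ⋯ + z_dA_d)Ψ(z)ᵀ for all ζ, z ∈ ℂ^d. -/
open MvPolynomial

namespace ProdPolar

variable {d : ℕ}

abbrev V (d : ℕ) := (Fin d → ℂ) → (Fin d → ℂ) → ℂ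

noncomputable def ψ (a : Fin d → ℕ) : (Fin d → ℂ) → ℂ := fun z => ∏ v, z v ^ a v

noncomputable def mm (a b : Fin d → ℕ) : V d := fun ζ z => ψ a ζ * ψ b z

def addE (k : Fin d) (a : Fin d → ℕ) : Fin d → ℕ := Function.update a k (a k + 1)

lemma psi_addE (k : Fin d) (b : Fin d → ℕ) (z : Fin d → ℂ) :
    ψ (addE k b) z = z k * ψ b z := by
  unfold ψ addE
  rw [← Finset.mul_prod_erase Finset.univ _ (Finset.mem_univ k),
      ← Finset.mul_prod_erase Finset.univ (fun v => z v ^ b v) (Finset.mem_univ k)]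
  have hprod : (∏ v ∈ Finset.univ.erase k, z v ^ (Function.update b k (b k + 1) v))
      = ∏ v ∈ Finset.univ.erase k, z v ^ b v :=
    Finset.prod_congr rfl (fun j hj => by
      rw [Function.update_of_ne (Finset.ne_of_mem_erase hj)])
  rw [hprod, Function.update_self, pow_succ]
  ring

lemma sum_apply_update (F : Fin d → ℕ → ℕ) (a : Fin d → ℕ) (k : Fin d) (v : ℕ) :
    ∑ j, F j (Function.update a k v j)
      = F k v + ∑ j ∈ Finset.univ.erase k, F j (a j) := by
  rw [← Finset.add_sum_erase _ _ (Finset.mem_univ k), Function.update_self]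
  congr 1
  exact Finset.sum_congr rfl (fun j hj => by
    rw [Function.update_of_ne (Finset.ne_of_mem_erase hj)])

lemma sum_split (F : Fin d → ℕ → ℕ) (a : Fin d → ℕ) (k : Fin d) :
    ∑ j, F j (a j) = F k (a k) + ∑ j ∈ Finset.univ.erase k, F j (a j) :=
  (Finset.add_sum_erase _ _ (Finset.mem_univ k)).symm

def meas (a c : Fin d → ℕ) : ℕ := ∑ j, ((a j - c j) + (c j - a j))

section Core

variable (Nk : Fin d → ℕ) (Nt : ℕ)

def Adm (a : Fin d → ℕ) : Prop := (∀ k, a k ≤ Nk k) ∧ (∑ k, a k) ≤ Nt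

abbrev Idx := {α : (i : Fin d) → Fin (Nk i + 1) // (∑ i, ((α i : ℕ))) ≤ Nt}

def ex (i : Idx Nk Nt) : Fin d → ℕ := fun k => (i.1 k : ℕ)

noncomputable def gen (t : Fin (d + 1) × Idx Nk Nt × Idx Nk Nt) : V d :=
  Fin.cases (mm (ex Nk Nt t.2.1) (ex Nk Nt t.2.2) + mm (ex Nk Nt t.2.2) (ex Nk Nt t.2.1))
    (fun k => mm (ex Nk Nt t.2.1) (addE k (ex Nk Nt t.2.2))
      + mm (ex Nk Nt t.2.2) (addE k (ex Nk Nt t.2.1))) t.1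

noncomputable def W : Submodule ℝ (V d) := Submodule.span ℝ (Set.range (gen Nk Nt))

variable {Nk Nt}

lemma toIdx {a : Fin d → ℕ} (h : Adm Nk Nt a) : ∃ i : Idx Nk Nt, ex Nk Nt i = a := by
  refine ⟨⟨fun k => ⟨a k, Nat.lt_succ_of_le (h.1 k)⟩, ?_⟩, ?_⟩
  · simpa using h.2
  · funext k; rfl

lemma genA_mem {a b : Fin d → ℕ} (ha : Adm Nk Nt a) (hb : Adm Nk Nt b) :
    mm a b + mm b a ∈ W Nk Nt := by
  obtain ⟨i, hi⟩ := toIdx ha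
  obtain ⟨j, hj⟩ := toIdx hb
  have : mm a b + mm b a = gen Nk Nt (0, i, j) := by
    rw [← hi, ← hj]; simp [gen]
  rw [this]
  exact Submodule.subset_span ⟨(0, i, j), rfl⟩

lemma genB_mem {a b : Fin d → ℕ} (ha : Adm Nk Nt a) (hb : Adm Nk Nt b) (k : Fin d) :
    mm a (addE k b) + mm b (addE k a) ∈ W Nk Nt := by
  obtain ⟨i, hi⟩ := toIdx ha
  obtain ⟨j, hj⟩ := toIdx hb
  have : mm a (addE k b) + mm b (addE k a) = gen Nk Nt (k.succ, i, j) := by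
    rw [← hi, ← hj]; simp [gen]
  rw [this]
  exact Submodule.subset_span ⟨(k.succ, i, j), rfl⟩

lemma star {u v : Fin d → ℕ} (k : Fin d) (hu : Adm Nk Nt u) (hv : Adm Nk Nt v)
    (huk : Adm Nk Nt (addE k u)) :
    mm (addE k u) v - mm u (addE k v) ∈ W Nk Nt := by
  have h1 := genB_mem hu hv k
  have h2 := genA_mem huk hv
  have h3 := Submodule.sub_mem _ h2 h1
  have heq : mm (addE k u) v - mm u (addE k v)
      = (mm (addE k u) v + mm v (addE k u)) - (mm u (addE k v) + mm v (addE k u)) := by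
    abel
  rw [heq]; exact h3

lemma reach (D : ℕ) : ∀ (a b c e : Fin d → ℕ), meas a c ≤ D →
    Adm Nk Nt a → Adm Nk Nt c → Adm Nk Nt e →
    (∀ k, a k + b k = c k + e k) → (∀ k, b k ≤ Nk k) → (∑ k, b k) ≤ Nt + 1 →
    mm a b - mm c e ∈ W Nk Nt := by
  induction D with
  | zero =>
    intro a b c e hm ha hc he hsum hbk hbt
    have hac : a = c := by
      funext j
      have h0 : ((a j - c j) + (c j - a j)) = 0 :=
        Finset.sum_eq_zero_iff.mp (Nat.le_zero.mp hm) j (Finset.mem_univ j)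
      omega
    have hbe : b = e := by
      funext j
      have h1 := hsum j
      have h2 : a j = c j := congrFun hac j
      omega
    rw [hac, hbe, sub_self]
    exact (W Nk Nt).zero_mem
  | succ D ih =>
    intro a b c e hm ha hc he hsum hbk hbt
    by_cases hac : a = c
    · have hbe : b = e := by
        funext j
        have h1 := hsum j
        have h2 : a j = c j := congrFun hac j
        omega
      rw [hac, hbe, sub_self]
      exact (W Nk Nt).zero_mem
    by_cases H1 : (∃ k, c k < a k) ∧ (∑ k, b k) ≤ Nt
    · -- down move
      obtain ⟨⟨k, hk⟩, hbn⟩ := H1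
      set a' := Function.update a k (a k - 1) with ha'def
      have haE : addE k a' = a := by
        funext j
        by_cases hj : k = j
        · subst hj; simp [addE, a']; omega
        · simp [addE, a', Function.update_of_ne (Ne.symm hj)]
      have e1 : (∑ j, a' j) = (a k - 1) + ∑ j ∈ Finset.univ.erase k, a j :=
        sum_apply_update (fun _ x => x) a k (a k - 1)
      have e2 : (∑ j, a j) = a k + ∑ j ∈ Finset.univ.erase k, a j :=
        sum_split (fun _ x => x) a k
      have hAa' : Adm Nk Nt a' := by
        constructor
        · intro j
          by_cases hj : k = j
          · subst hj; simp [a']; have := ha.1 k; omega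
          · simp [a', Function.update_of_ne (Ne.symm hj)]; exact ha.1 j
        · have := ha.2; omega
      have hAb : Adm Nk Nt b := ⟨hbk, hbn⟩
      have hstep : mm a b - mm a' (addE k b) ∈ W Nk Nt := by
        have hs := star k hAa' hAb (by rwa [haE])
        rwa [haE] at hs
      have m1 : meas a' c = ((a k - 1) - c k + (c k - (a k - 1)))
          + ∑ j ∈ Finset.univ.erase k, ((a j - c j) + (c j - a j)) :=
        sum_apply_update (fun j x => (x - c j) + (c j - x)) a k (a k - 1)
      have m2 : meas a c = ((a k - c k) + (c k - a k))
          + ∑ j ∈ Finset.univ.erase k, ((a j - c j) + (c j - a j)) :=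
        sum_split (fun j x => (x - c j) + (c j - x)) a k
      have hmeas' : meas a' c ≤ D := by omega
      have hrec : mm a' (addE k b) - mm c e ∈ W Nk Nt := by
        apply ih a' (addE k b) c e hmeas' hAa' hc he
        · intro j
          by_cases hj : k = j
          · subst hj
            have h1 := hsum k
            simp [a', addE]
            omega
          · simp [a', addE, Function.update_of_ne (Ne.symm hj)]; exact hsum j
        · intro j
          by_cases hj : k = j
          · subst hj
            have h1 := hsum k
            have h2 := he.1 k
            simp [addE]
            omega
          · simp [addE, Function.update_of_ne (Ne.symm hj)]; exact hbk j
        · have f1 : (∑ j, addE k b j) = (b k + 1) + ∑ j ∈ Finset.univ.erase k, b j :=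
            sum_apply_update (fun _ x => x) b k (b k + 1)
          have f2 : (∑ j, b j) = b k + ∑ j ∈ Finset.univ.erase k, b j :=
            sum_split (fun _ x => x) b k
          omega
      have hfin := (W Nk Nt).add_mem hstep hrec
      rwa [sub_add_sub_cancel] at hfin
    · -- up move
      have hklt : ∃ k, a k < c k := by
        by_contra hno
        push_neg at hno
        have hEx : ∃ k, c k < a k := by
          by_contra h2
          push_neg at h2
          exact hac (funext fun j => le_antisymm (by have := h2 j; omega) (hno j))
        have hbn : ¬(∑ k, b k) ≤ Nt := fun hb => H1 ⟨hEx, hb⟩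
        have hble : (∑ k, b k) ≤ ∑ k, e k :=
          Finset.sum_le_sum (fun j _ => by have := hsum j; have := hno j; omega)
        exact hbn (le_trans hble he.2)
      obtain ⟨k, hklt⟩ := hklt
      have hbk1 : 1 ≤ b k := by have := hsum k; omega
      set b' := Function.update b k (b k - 1) with hb'def
      have hbE : addE k b' = b := by
        funext j
        by_cases hj : k = j
        · subst hj; simp [addE, b']; omega
        · simp [addE, b', Function.update_of_ne (Ne.symm hj)]
      have f1 : (∑ j, b' j) = (b k - 1) + ∑ j ∈ Finset.univ.erase k, b j :=
        sum_apply_update (fun _ x => x) b k (b k - 1)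
      have f2 : (∑ j, b j) = b k + ∑ j ∈ Finset.univ.erase k, b j :=
        sum_split (fun _ x => x) b k
      have hsa : (∑ j, a j) < Nt := by
        by_cases hsb : (∑ j, b j) ≤ Nt
        · have h2 : ∀ j, a j ≤ c j := fun j => by
            by_contra hj
            exact H1 ⟨⟨j, by omega⟩, hsb⟩
          have hlt : (∑ j, a j) < ∑ j, c j :=
            Finset.sum_lt_sum (fun j _ => h2 j) ⟨k, Finset.mem_univ k, hklt⟩
          exact lt_of_lt_of_le hlt hc.2
        · have htot : (∑ j, a j) + (∑ j, b j) = (∑ j, c j) + (∑ j, e j) := by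
            rw [← Finset.sum_add_distrib, ← Finset.sum_add_distrib]
            exact Finset.sum_congr rfl (fun j _ => hsum j)
          have := hc.2; have := he.2; omega
      have g1 : (∑ j, addE k a j) = (a k + 1) + ∑ j ∈ Finset.univ.erase k, a j :=
        sum_apply_update (fun _ x => x) a k (a k + 1)
      have g2 : (∑ j, a j) = a k + ∑ j ∈ Finset.univ.erase k, a j :=
        sum_split (fun _ x => x) a k
      have hAak : Adm Nk Nt (addE k a) := by
        constructor
        · intro j
          by_cases hj : k = j
          · subst hj; have := hc.1 k; simp [addE]; omega
          · simp [addE, Function.update_of_ne (Ne.symm hj)]; exact ha.1 j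
        · omega
      have hAb' : Adm Nk Nt b' := by
        constructor
        · intro j
          by_cases hj : k = j
          · subst hj; simp [b']; have := hbk k; omega
          · simp [b', Function.update_of_ne (Ne.symm hj)]; exact hbk j
        · omega
      have hstep : mm (addE k a) b' - mm a b ∈ W Nk Nt := by
        have hs := star k ha hAb' hAak
        rwa [hbE] at hs
      have m1 : meas (addE k a) c = ((a k + 1) - c k + (c k - (a k + 1)))
          + ∑ j ∈ Finset.univ.erase k, ((a j - c j) + (c j - a j)) :=
        sum_apply_update (fun j x => (x - c j) + (c j - x)) a k (a k + 1)
      have m2 : meas a c = ((a k - c k) + (c k - a k))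
          + ∑ j ∈ Finset.univ.erase k, ((a j - c j) + (c j - a j)) :=
        sum_split (fun j x => (x - c j) + (c j - x)) a k
      have hmeas' : meas (addE k a) c ≤ D := by omega
      have hrec : mm (addE k a) b' - mm c e ∈ W Nk Nt := by
        apply ih (addE k a) b' c e hmeas' hAak hc he
        · intro j
          by_cases hj : k = j
          · subst hj
            have h1 := hsum k
            simp [addE, b']
            omega
          · simp [addE, b', Function.update_of_ne (Ne.symm hj)]; exact hsum j
        · exact hAb'.1
        · omega
      have hfin := (W Nk Nt).add_mem ((W Nk Nt).neg_mem hstep) hrec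
      rwa [neg_sub, sub_add_sub_cancel] at hfin

lemma pair_mem {a b : Fin d → ℕ} (ha : Adm Nk Nt a) (hb : Adm Nk Nt b) :
    mm a b ∈ W Nk Nt := by
  have h1 : mm a b - mm b a ∈ W Nk Nt :=
    reach (meas a b) a b b a le_rfl ha hb ha (fun k => Nat.add_comm _ _) hb.1
      (le_trans hb.2 (Nat.le_succ _))
  have h2 := genA_mem ha hb
  have h3 := (W Nk Nt).add_mem h1 h2
  have h4 : mm a b - mm b a + (mm a b + mm b a) = (2:ℝ) • mm a b := by
    rw [two_smul]; abel
  rw [h4] at h3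
  have h5 := (W Nk Nt).smul_mem ((2:ℝ)⁻¹) h3
  rwa [inv_smul_smul₀ (by norm_num : (2:ℝ) ≠ 0)] at h5

lemma final_sum (c : (Fin (d + 1) × Idx Nk Nt × Idx Nk Nt) → ℝ) (ζ z : Fin d → ℂ) :
    (∑ t, c t • gen Nk Nt t) ζ z
      = ∑ i, ∑ j, ψ (ex Nk Nt i) ζ *
          ((((c (0, i, j) + c (0, j, i) : ℝ)) : ℂ)
            + ∑ k : Fin d, z k * (((c (k.succ, i, j) + c (k.succ, j, i) : ℝ)) : ℂ))
          * ψ (ex Nk Nt j) z := by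
  have L1 : (∑ t, c t • gen Nk Nt t) ζ z
      = (∑ i, ∑ j, (c (0, i, j) : ℂ) *
            (ψ (ex Nk Nt i) ζ * ψ (ex Nk Nt j) z + ψ (ex Nk Nt j) ζ * ψ (ex Nk Nt i) z))
        + ∑ k : Fin d, ∑ i, ∑ j, (c (k.succ, i, j) : ℂ) *
            (ψ (ex Nk Nt i) ζ * (z k * ψ (ex Nk Nt j) z)
              + ψ (ex Nk Nt j) ζ * (z k * ψ (ex Nk Nt i) z)) := by
    simp only [Finset.sum_apply, Pi.smul_apply, Complex.real_smul, Fintype.sum_prod_type]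
    rw [Fin.sum_univ_succ]
    congr 1
    exact Finset.sum_congr rfl fun k _ => Finset.sum_congr rfl fun i _ =>
      Finset.sum_congr rfl fun j _ => by simp [gen, mm, psi_addE]
  have hterm : ∀ i j, ψ (ex Nk Nt i) ζ *
          ((((c (0, i, j) + c (0, j, i) : ℝ)) : ℂ)
            + ∑ k : Fin d, z k * (((c (k.succ, i, j) + c (k.succ, j, i) : ℝ)) : ℂ))
          * ψ (ex Nk Nt j) z
      = ((c (0, i, j) : ℂ) * (ψ (ex Nk Nt i) ζ * ψ (ex Nk Nt j) z)
          + (c (0, j, i) : ℂ) * (ψ (ex Nk Nt i) ζ * ψ (ex Nk Nt j) z))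
        + ∑ k : Fin d,
            ((c (k.succ, i, j) : ℂ) * (ψ (ex Nk Nt i) ζ * (z k * ψ (ex Nk Nt j) z))
              + (c (k.succ, j, i) : ℂ) * (ψ (ex Nk Nt i) ζ * (z k * ψ (ex Nk Nt j) z))) := by
    intro i j
    push_cast
    rw [mul_add, add_mul, Finset.mul_sum, Finset.sum_mul]
    congr 1
    · ring
    · apply Finset.sum_congr rfl; intro k _; ring
  have R1 : (∑ i, ∑ j, ψ (ex Nk Nt i) ζ *
          ((((c (0, i, j) + c (0, j, i) : ℝ)) : ℂ)
            + ∑ k : Fin d, z k * (((c (k.succ, i, j) + c (k.succ, j, i) : ℝ)) : ℂ))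
          * ψ (ex Nk Nt j) z)
      = ∑ i, ∑ j,
          (((c (0, i, j) : ℂ) * (ψ (ex Nk Nt i) ζ * ψ (ex Nk Nt j) z)
          + (c (0, j, i) : ℂ) * (ψ (ex Nk Nt i) ζ * ψ (ex Nk Nt j) z))
        + ∑ k : Fin d,
            ((c (k.succ, i, j) : ℂ) * (ψ (ex Nk Nt i) ζ * (z k * ψ (ex Nk Nt j) z))
              + (c (k.succ, j, i) : ℂ) * (ψ (ex Nk Nt i) ζ * (z k * ψ (ex Nk Nt j) z)))) :=
    Finset.sum_congr rfl fun i _ => Finset.sum_congr rfl fun j _ => hterm i j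
  rw [L1, R1]
  simp only [mul_add, Finset.sum_add_distrib]
  have hB : (∑ x : Idx Nk Nt, ∑ x_1 : Idx Nk Nt,
        (c (0, x, x_1) : ℂ) * (ψ (ex Nk Nt x_1) ζ * ψ (ex Nk Nt x) z))
      = ∑ x : Idx Nk Nt, ∑ x_1 : Idx Nk Nt,
        (c (0, x_1, x) : ℂ) * (ψ (ex Nk Nt x) ζ * ψ (ex Nk Nt x_1) z) := Finset.sum_comm
  have hC : (∑ x : Fin d, ∑ x_1 : Idx Nk Nt, ∑ x_2 : Idx Nk Nt,
        (c (x.succ, x_1, x_2) : ℂ) * (ψ (ex Nk Nt x_1) ζ * (z x * ψ (ex Nk Nt x_2) z)))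
      = ∑ x : Idx Nk Nt, ∑ x_1 : Idx Nk Nt, ∑ x_2 : Fin d,
        (c (x_2.succ, x, x_1) : ℂ) * (ψ (ex Nk Nt x) ζ * (z x_2 * ψ (ex Nk Nt x_1) z)) := by
    rw [Finset.sum_comm]
    exact Finset.sum_congr rfl fun _ _ => Finset.sum_comm
  have hD : (∑ x : Fin d, ∑ x_1 : Idx Nk Nt, ∑ x_2 : Idx Nk Nt,
        (c (x.succ, x_1, x_2) : ℂ) * (ψ (ex Nk Nt x_2) ζ * (z x * ψ (ex Nk Nt x_1) z)))
      = ∑ x : Idx Nk Nt, ∑ x_1 : Idx Nk Nt, ∑ x_2 : Fin d,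
        (c (x_2.succ, x_1, x) : ℂ) * (ψ (ex Nk Nt x) ζ * (z x_2 * ψ (ex Nk Nt x_1) z)) := by
    have rot : (∑ x : Fin d, ∑ x_1 : Idx Nk Nt, ∑ x_2 : Idx Nk Nt,
          (c (x.succ, x_1, x_2) : ℂ) * (ψ (ex Nk Nt x_2) ζ * (z x * ψ (ex Nk Nt x_1) z)))
        = ∑ x_1 : Idx Nk Nt, ∑ x_2 : Idx Nk Nt, ∑ x : Fin d,
          (c (x.succ, x_1, x_2) : ℂ) * (ψ (ex Nk Nt x_2) ζ * (z x * ψ (ex Nk Nt x_1) z)) := by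
      rw [Finset.sum_comm]
      exact Finset.sum_congr rfl fun _ _ => Finset.sum_comm
    rw [rot]
    exact Finset.sum_comm
  rw [hB, hC, hD]

end Core

end ProdPolar

open ProdPolar

theorem product_polarization (d : ℕ) (q p : MvPolynomial (Fin d) ℝ) :
    ∃ A : Fin (d + 1) →
        Matrix {α : (i : Fin d) → Fin (max (q.degreeOf i) (p.degreeOf i) + 1) //
                  (∑ i, ((α i : ℕ))) ≤ max q.totalDegree p.totalDegree}
               {α : (i : Fin d) → Fin (max (q.degreeOf i) (p.degreeOf i) + 1) //
                  (∑ i, ((α i : ℕ))) ≤ max q.totalDegree p.totalDegree} ℝ,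
      (∀ k, (A k).IsSymm) ∧
      ∀ ζ z : Fin d → ℂ,
        eval ζ (map (algebraMap ℝ ℂ) q) * eval z (map (algebraMap ℝ ℂ) p) =
          ∑ i, ∑ j,
            (∏ v, ζ v ^ ((i.1 v : ℕ))) *
              ((A 0 i j : ℂ) + ∑ k : Fin d, z k * (A k.succ i j : ℂ)) *
              (∏ v, z v ^ ((j.1 v : ℕ))) := by
  classical
  set Nk : Fin d → ℕ := fun i => max (q.degreeOf i) (p.degreeOf i) with hNkdef
  set Nt : ℕ := max q.totalDegree p.totalDegree with hNtdef
  have hqAdm : ∀ u ∈ q.support, Adm Nk Nt (fun i => u i) := by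
    intro u hu
    constructor
    · intro i
      have h1 : u i ≤ q.degreeOf i := by
        rw [degreeOf_eq_sup]; exact Finset.le_sup (f := fun m => m i) hu
      exact le_trans h1 (le_max_left _ _)
    · have h1 : (∑ i, u i) = u.sum fun _ e => e :=
        (Finsupp.sum_fintype u (fun _ e => e) (fun _ => rfl)).symm
      calc (∑ i, u i) = u.sum fun _ e => e := h1
        _ ≤ q.totalDegree := le_totalDegree hu
        _ ≤ Nt := le_max_left _ _
  have hpAdm : ∀ u ∈ p.support, Adm Nk Nt (fun i => u i) := by
    intro u hu
    constructor
    · intro i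
      have h1 : u i ≤ p.degreeOf i := by
        rw [degreeOf_eq_sup]; exact Finset.le_sup (f := fun m => m i) hu
      exact le_trans h1 (le_max_right _ _)
    · have h1 : (∑ i, u i) = u.sum fun _ e => e :=
        (Finsupp.sum_fintype u (fun _ e => e) (fun _ => rfl)).symm
      calc (∑ i, u i) = u.sum fun _ e => e := h1
        _ ≤ p.totalDegree := le_totalDegree hu
        _ ≤ Nt := le_max_right _ _
  have hmem : (fun ζ z : Fin d → ℂ =>
      eval ζ (map (algebraMap ℝ ℂ) q) * eval z (map (algebraMap ℝ ℂ) p)) ∈ W Nk Nt := by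
    have hrw : (fun ζ z : Fin d → ℂ =>
        eval ζ (map (algebraMap ℝ ℂ) q) * eval z (map (algebraMap ℝ ℂ) p))
        = ∑ u ∈ q.support, ∑ v ∈ p.support,
            (q.coeff u * p.coeff v) • mm (fun i => u i) (fun i => v i) := by
      funext ζ z
      simp only [Finset.sum_apply, Pi.smul_apply, Complex.real_smul, mm]
      rw [eval_map, eval_map, eval₂_eq', eval₂_eq', Finset.sum_mul_sum]
      refine Finset.sum_congr rfl fun u _ => Finset.sum_congr rfl fun v _ => ?_
      simp only [ψ, Complex.coe_algebraMap]
      push_cast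
      ring
    rw [hrw]
    exact Submodule.sum_mem _ fun u hu => Submodule.sum_mem _ fun v hv =>
      Submodule.smul_mem _ _ (pair_mem (hqAdm u hu) (hpAdm v hv))
  rw [W, Submodule.mem_span_range_iff_exists_fun ℝ] at hmem
  obtain ⟨c, hc⟩ := hmem
  refine ⟨fun k => Matrix.of fun i j => c (k, i, j) + c (k, j, i), fun k => ?_, fun ζ z => ?_⟩
  · show Matrix.transpose _ = _
    ext i j
    simp only [Matrix.transpose_apply, Matrix.of_apply]
    exact add_comm _ _
  · have h1 := congrFun (congrFun hc ζ) z
    rw [← h1, final_sum]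
    rfl
end

section
/- Suppose q(ζ)p(z) = Ψ(ζ)(A₀ + z₁A₁ + ⋯ + z_dA_d)Ψ(z)ᵀ identically, where A₀,…,A_d are real symmetric matrices and Ψ(z) is a row vector of monomials. Then for each k, the partial Wronskian q(z)·∂p/∂z_k(z) − p(z)·∂q/∂z_k(z) equals Ψ(z) A_k Ψ(z)ᵀ. -/
open MvPolynomial

theorem wronskian_from_polarization (d N : ℕ) (q p : MvPolynomial (Fin d) ℝ)
    (E : Fin N → Fin d → ℕ) (A : Fin (d + 1) → Matrix (Fin N) (Fin N) ℝ)
    (hsym : ∀ k, (A k).IsSymm)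
    (hrep : ∀ ζ z : Fin d → ℂ,
      eval ζ (map (algebraMap ℝ ℂ) q) * eval z (map (algebraMap ℝ ℂ) p) =
        ∑ i, ∑ j,
          (∏ v, ζ v ^ E i v) *
            ((A 0 i j : ℂ) + ∑ k : Fin d, z k * (A k.succ i j : ℂ)) *
            (∏ v, z v ^ E j v)) :
    ∀ (k : Fin d) (z : Fin d → ℂ),
      eval z (map (algebraMap ℝ ℂ) q) * eval z (map (algebraMap ℝ ℂ) (pderiv k p)) -
          eval z (map (algebraMap ℝ ℂ) p) * eval z (map (algebraMap ℝ ℂ) (pderiv k q)) =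
        ∑ i, ∑ j, (∏ v, z v ^ E i v) * (A k.succ i j : ℂ) * (∏ v, z v ^ E j v) := by
  intro k z
  set Q := map (algebraMap ℝ ℂ) q with hQ
  set P := map (algebraMap ℝ ℂ) p with hP
  set Ψ : Fin N → MvPolynomial (Fin d) ℂ := fun j => ∏ v, X v ^ E j v with hΨ
  have hΨeval : ∀ (w : Fin d → ℂ) (j : Fin N), eval w (Ψ j) = ∏ v, w v ^ E j v := by
    intro w j; simp [hΨ]
  set B : Fin N → Fin N → ℂ :=
    fun i j => (A 0 i j : ℂ) + ∑ k' : Fin d, z k' * (A k'.succ i j : ℂ) with hB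
  have hBsymm : ∀ i j, B i j = B j i := by
    intro i j
    simp only [hB, (hsym 0).apply, fun k' : Fin d => (hsym k'.succ).apply]
  -- Step 1: polynomial identity in the second variable (ζ := z fixed)
  have hpoly1 : C (eval z Q) * P =
      ∑ i, ∑ j, C (eval z (Ψ i)) *
        ((C ((A 0 i j : ℂ)) + ∑ k' : Fin d, X k' * C ((A k'.succ i j : ℂ))) * Ψ j) := by
    apply MvPolynomial.funext
    intro x
    have := hrep z x
    simp only [map_sum, eval_mul, eval_C, eval_add, eval_X, hΨeval]
    rw [this]
    exact Finset.sum_congr rfl fun i _ => Finset.sum_congr rfl fun j _ => by ring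
  have h1 : eval z Q * eval z (map (algebraMap ℝ ℂ) (pderiv k p)) =
      ∑ i, ∑ j, eval z (Ψ i) *
        ((A k.succ i j : ℂ) * eval z (Ψ j) + B i j * eval z (pderiv k (Ψ j))) := by
    have hd := congrArg (fun f => eval z (pderiv k f)) hpoly1
    simp only [pderiv_C_mul, map_sum, pderiv_mul, pderiv_X, pderiv_C, map_add,
      eval_mul, eval_add, eval_C, eval_X, hΨeval, mul_zero, add_zero, zero_mul,
      Pi.single_apply, mul_ite, mul_one, ite_mul, Finset.sum_ite_eq',
      Finset.mem_univ, if_true, map_zero, map_one, zero_add] at hd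
    rw [← pderiv_map, ← hP, hd]
    exact Finset.sum_congr rfl fun i _ => Finset.sum_congr rfl fun j _ => by
      simp only [hB, hΨeval]; ring
  -- Step 2: polynomial identity in the first variable (z fixed)
  have hpoly2 : Q * C (eval z P) = ∑ i, ∑ j, Ψ i * C (B i j * eval z (Ψ j)) := by
    apply MvPolynomial.funext
    intro x
    have := hrep x z
    simp only [map_sum, eval_mul, eval_C, hΨeval]
    rw [this]
    exact Finset.sum_congr rfl fun i _ => Finset.sum_congr rfl fun j _ => by
      simp only [hB, hΨeval]; ring
  have h2 : eval z P * eval z (map (algebraMap ℝ ℂ) (pderiv k q)) =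
      ∑ i, ∑ j, eval z (pderiv k (Ψ i)) * (B i j * eval z (Ψ j)) := by
    have hd := congrArg (fun f => eval z (pderiv k f)) hpoly2
    simp only [map_sum, pderiv_mul, pderiv_C, mul_zero, add_zero, eval_mul, eval_add,
      eval_C] at hd
    rw [← pderiv_map, ← hQ, mul_comm]
    exact hd
  have hcancel : ∑ i, ∑ j, eval z (Ψ i) * (B i j * eval z (pderiv k (Ψ j))) =
      ∑ i, ∑ j, eval z (pderiv k (Ψ i)) * (B i j * eval z (Ψ j)) := by
    rw [Finset.sum_comm]
    exact Finset.sum_congr rfl fun j _ => Finset.sum_congr rfl fun i _ => by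
      rw [hBsymm]; ring
  rw [h1, h2, ← hcancel, ← Finset.sum_sub_distrib]
  refine Finset.sum_congr rfl fun i _ => ?_
  rw [← Finset.sum_sub_distrib]
  refine Finset.sum_congr rfl fun j _ => ?_
  rw [hΨeval, hΨeval]
  ring
end
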